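/- arXiv:2206.06733 — 5 statements merged into one kernel-verified Lean document; each statement's English description precedes it below -/
import Mathlib

section
/- Regret bound for approximate mirror descent: Suppose f : ℝⁿ → ℝ is μ-strongly convex (μ>0) with minimizer x*, and Ψ is a σ-strongly convex mirror potential. Let (x̃_k) be any sequence, and define the exact MD iterates x_{k+1} = (∇Ψ)⁻¹(∇Ψ(x̃_k) − t_k∇f(x̃_k)). Then Σ_{k=1}^K t_k(f(x̃_k) − f(x*)) ≤ B_Ψ(x*, x̃₁) + Σ_{k=1}^K [ (1/σ) t_k² ‖∇f(x̃_k)‖_*² + (1/(2t_kμ) + 1/σ) ‖∇Ψ(x̃_{k+1}) − ∇Ψ(x_{k+1})‖_*² ]. -/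
open RealInnerProductSpace

/-!
Let `a = x̃ₖ`, let `b = xₖ₊₁` be the exact mirror step from `a`, let `c = x̃ₖ₊₁` and
`d = ∇Ψ c - ∇Ψ b`. Expanding Bregman divergences `B = B_Ψ`,
`t (f a - f x*) = B(x*, a) - B(x*, c) + B(a, b) + (⟪d, c - b⟫ - B(c, b)) + ⟪d, b - a⟫
  + (⟪d, a - x*⟫ - t B_f(x*, a))`.
The first difference telescopes over `k`. Strong convexity of `Ψ` gives `B(a, b) ≤ t²‖∇f a‖²_* / 2σ`
and `N(a - b) ≤ t‖∇f a‖_* / σ`, and Young's inequality absorbs the error terms in `d` into the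
strong convexity of `Ψ` and `f`. The dual norm is finite because in finite dimension every norm
dominates a multiple of the Euclidean one.
-/

section NormEquivalence

variable {E : Type*} [NormedAddCommGroup E] [NormedSpace ℝ E] [FiniteDimensional ℝ E]

theorem Seminorm.exists_pos_mul_norm_le (p : Seminorm ℝ E) (hp : ∀ x, p x = 0 → x = 0) :
    ∃ m > 0, ∀ x, m * ‖x‖ ≤ p x := by
  have hcont : Continuous p := p.convexOn.locallyLipschitz.continuous
  have hpos : ∀ x ∈ Metric.sphere (0 : E) 1, 0 < p x := fun x hx =>
    (apply_nonneg p x).lt_of_ne' fun h => by simp [hp x h] at hx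
  obtain ⟨m, hm, hmp⟩ := (isCompact_sphere (0 : E) 1).exists_forall_le' hcont.continuousOn hpos
  refine ⟨m, hm, fun x => ?_⟩
  rcases eq_or_ne x 0 with rfl | hx
  · simp
  · have hxpos : 0 < ‖x‖ := norm_pos_iff.2 hx
    have := hmp (‖x‖⁻¹ • x) (by simp [norm_smul, hxpos.ne'])
    rwa [map_smul_eq_mul, Real.norm_eq_abs, abs_inv, abs_norm, le_inv_mul_iff₀ hxpos,
      mul_comm] at this

end NormEquivalence

section DualNorm

variable {E : Type*} [NormedAddCommGroup E] [InnerProductSpace ℝ E]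

noncomputable def dualNorm (N : E → ℝ) (y : E) : ℝ :=
  sSup {r | ∃ x, N x ≤ 1 ∧ r = ⟪y, x⟫}

variable {p : Seminorm ℝ E} {m : ℝ}

theorem bddAbove_inner_of_mul_norm_le (hm : 0 < m) (hp : ∀ x, m * ‖x‖ ≤ p x) (y : E) :
    BddAbove {r | ∃ x, p x ≤ 1 ∧ r = ⟪y, x⟫} := by
  refine ⟨‖y‖ / m, ?_⟩
  rintro _ ⟨x, hx, rfl⟩
  have hxm : ‖x‖ ≤ 1 / m := by rw [le_div_iff₀ hm]; linarith [hp x]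
  calc ⟪y, x⟫ ≤ ‖y‖ * ‖x‖ := real_inner_le_norm y x
    _ ≤ ‖y‖ * (1 / m) := by gcongr
    _ = ‖y‖ / m := by ring

theorem dualNorm_nonneg (hm : 0 < m) (hp : ∀ x, m * ‖x‖ ≤ p x) (y : E) : 0 ≤ dualNorm p y :=
  le_csSup (bddAbove_inner_of_mul_norm_le hm hp y) ⟨0, by simp, by simp⟩

theorem inner_le_dualNorm_mul (hm : 0 < m) (hp : ∀ x, m * ‖x‖ ≤ p x) (y x : E) :
    ⟪y, x⟫ ≤ dualNorm p y * p x := by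
  rcases (apply_nonneg p x).eq_or_lt with hx | hx
  · have : x = 0 := norm_le_zero_iff.1 <| by nlinarith [hp x, norm_nonneg x]
    simp [this]
  · have hunit : p ((p x)⁻¹ • x) ≤ 1 := by
      rw [map_smul_eq_mul, Real.norm_eq_abs, abs_inv, abs_of_pos hx, inv_mul_cancel₀ hx.ne']
    have := le_csSup (bddAbove_inner_of_mul_norm_le hm hp y) ⟨_, hunit, rfl⟩
    rw [real_inner_smul_right, inv_mul_le_iff₀ hx] at this
    rwa [mul_comm] at this

end DualNorm

theorem mul_sub_half_mul_sq_le {s : ℝ} (hs : 0 < s) (a b : ℝ) :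
    a * b - s / 2 * b ^ 2 ≤ a ^ 2 / (2 * s) := by
  rw [le_div_iff₀ (by positivity)]
  nlinarith [sq_nonneg (a - s * b)]

section Bregman

variable {E : Type*} [NormedAddCommGroup E] [InnerProductSpace ℝ E] [CompleteSpace E]

noncomputable def bregman (Ψ : E → ℝ) (x y : E) : ℝ :=
  Ψ x - Ψ y - ⟪gradient Ψ y, x - y⟫

theorem bregman_add_bregman_swap (Ψ : E → ℝ) (x y : E) :
    bregman Ψ x y + bregman Ψ y x = ⟪gradient Ψ x - gradient Ψ y, x - y⟫ := by
  simp only [bregman, inner_sub_left, inner_sub_right]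
  ring

theorem mul_sq_le_bregman {Ψ : E → ℝ} {N : E → ℝ} {σ : ℝ}
    (hΨ : ∀ x y, Ψ y ≥ Ψ x + ⟪gradient Ψ x, y - x⟫ + σ / 2 * N (y - x) ^ 2) (x y : E) :
    σ / 2 * N (x - y) ^ 2 ≤ bregman Ψ x y := by
  have := hΨ y x
  rw [bregman]
  linarith

variable {p : Seminorm ℝ E} {q : E → ℝ} {Ψ f : E → ℝ} {σ μ t : ℝ} {a b c z g : E}

theorem bregman_le_of_mirror_step (hσ : 0 < σ) (ht : 0 ≤ t)
    (hΨ : ∀ x y, σ / 2 * p (x - y) ^ 2 ≤ bregman Ψ x y) (hdual : ∀ y x, ⟪y, x⟫ ≤ q y * p x)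
    (hstep : gradient Ψ b = gradient Ψ a - t • g) :
    bregman Ψ a b ≤ (t * q g) ^ 2 / (2 * σ) := by
  have hsum := bregman_add_bregman_swap Ψ a b
  rw [hstep, sub_sub_cancel, real_inner_smul_left] at hsum
  have hba := hΨ b a
  rw [map_sub_rev] at hba
  have := mul_sub_half_mul_sq_le hσ (t * q g) (p (a - b))
  linarith [mul_le_mul_of_nonneg_left (hdual g (a - b)) ht]

theorem seminorm_le_of_mirror_step (hσ : 0 < σ) (ht : 0 ≤ t)
    (hΨ : ∀ x y, σ / 2 * p (x - y) ^ 2 ≤ bregman Ψ x y) (hdual : ∀ y x, ⟪y, x⟫ ≤ q y * p x)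
    (hq : ∀ y, 0 ≤ q y) (hstep : gradient Ψ b = gradient Ψ a - t • g) :
    p (a - b) ≤ t * q g / σ := by
  have hsum := bregman_add_bregman_swap Ψ a b
  rw [hstep, sub_sub_cancel, real_inner_smul_left] at hsum
  have hab := hΨ a b
  have hba := hΨ b a
  rw [map_sub_rev] at hba
  have hsq : σ * p (a - b) ^ 2 ≤ t * q g * p (a - b) := by
    linarith [mul_le_mul_of_nonneg_left (hdual g (a - b)) ht]
  rw [le_div_iff₀ hσ]
  rcases (apply_nonneg p (a - b)).eq_or_lt with h | h
  · rw [← h, zero_mul]; exact mul_nonneg ht (hq g)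
  · nlinarith

theorem mirror_step_regret_le (hσ : 0 < σ) (hμ : 0 < μ) (ht : 0 < t)
    (hΨ : ∀ x y, σ / 2 * p (x - y) ^ 2 ≤ bregman Ψ x y)
    (hf : μ / 2 * p (z - a) ^ 2 ≤ bregman f z a)
    (hdual : ∀ y x, ⟪y, x⟫ ≤ q y * p x) (hq : ∀ y, 0 ≤ q y)
    (hstep : gradient Ψ b = gradient Ψ a - t • gradient f a) :
    t * (f a - f z) ≤ bregman Ψ z a - bregman Ψ z c
      + (1 / σ * t ^ 2 * q (gradient f a) ^ 2
        + (1 / (2 * t * μ) + 1 / σ) * q (gradient Ψ c - gradient Ψ b) ^ 2) := by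
  set G := q (gradient f a)
  set d := gradient Ψ c - gradient Ψ b
  set D := q d
  have key : t * (f a - f z) = bregman Ψ z a - bregman Ψ z c + bregman Ψ a b
      + (⟪d, c - b⟫ - bregman Ψ c b) + ⟪d, b - a⟫ + (⟪d, a - z⟫ - t * bregman f z a) := by
    simp only [d, bregman, hstep, inner_sub_left, inner_sub_right, real_inner_smul_left]
    ring
  have hab : bregman Ψ a b ≤ (t * G) ^ 2 / (2 * σ) :=
    bregman_le_of_mirror_step hσ ht.le hΨ hdual hstep
  have hcb : ⟪d, c - b⟫ - bregman Ψ c b ≤ D ^ 2 / (2 * σ) := by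
    linarith [hdual d (c - b), hΨ c b, mul_sub_half_mul_sq_le hσ D (p (c - b))]
  have hba : ⟪d, b - a⟫ ≤ ((t * G) ^ 2 + D ^ 2) / (2 * σ) := by
    have hdist := seminorm_le_of_mirror_step hσ ht.le hΨ hdual hq hstep
    calc ⟪d, b - a⟫ ≤ D * p (a - b) := by rw [← map_sub_rev]; exact hdual d (b - a)
      _ ≤ D * (t * G / σ) := mul_le_mul_of_nonneg_left hdist (hq d)
      _ = 2 * (t * G) * D / (2 * σ) := by field_simp
      _ ≤ ((t * G) ^ 2 + D ^ 2) / (2 * σ) := by gcongr; exact two_mul_le_add_sq _ _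
  have haz : ⟪d, a - z⟫ - t * bregman f z a ≤ D ^ 2 / (2 * (t * μ)) := by
    have hdz : ⟪d, a - z⟫ ≤ D * p (z - a) := by rw [map_sub_rev]; exact hdual d (a - z)
    linarith [mul_sub_half_mul_sq_le (mul_pos ht hμ) D (p (z - a)),
      mul_le_mul_of_nonneg_left hf ht.le]
  have hconst : (t * G) ^ 2 / (2 * σ) + D ^ 2 / (2 * σ) + ((t * G) ^ 2 + D ^ 2) / (2 * σ)
      + D ^ 2 / (2 * (t * μ)) = 1 / σ * t ^ 2 * G ^ 2 + (1 / (2 * t * μ) + 1 / σ) * D ^ 2 := by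
    field_simp
    ring
  linarith

end Bregman

theorem approximate_mirror_descent_regret_bound_general {n : ℕ}
    -- an arbitrary norm N on ℝⁿ and its dual norm Nstar
    (N : EuclideanSpace ℝ (Fin n) → ℝ)
    (hN0 : ∀ x, N x = 0 ↔ x = 0)
    (hNsmul : ∀ (c : ℝ) x, N (c • x) = |c| * N x)
    (hNadd : ∀ x y, N (x + y) ≤ N x + N y)
    (Nstar : EuclideanSpace ℝ (Fin n) → ℝ)
    (hNstar : ∀ y, Nstar y = sSup {r | ∃ x, N x ≤ 1 ∧ r = ⟪y, x⟫})
    -- objective: μ-strongly convex with minimizer xstar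
    (f : EuclideanSpace ℝ (Fin n) → ℝ)
    (μ : ℝ) (hμ : 0 < μ)
    (hfstrong : ∀ x y, f y ≥ f x + ⟪gradient f x, y - x⟫ + μ / 2 * (N (y - x)) ^ 2)
    (xstar : EuclideanSpace ℝ (Fin n))
    -- mirror potential, σ-strongly convex w.r.t. N
    (Ψ : EuclideanSpace ℝ (Fin n) → ℝ) (σ : ℝ) (hσ : 0 < σ)
    (hstrong : ∀ x y, Ψ y ≥ Ψ x + ⟪gradient Ψ x, y - x⟫ + σ / 2 * (N (y - x)) ^ 2)
    (B : EuclideanSpace ℝ (Fin n) → EuclideanSpace ℝ (Fin n) → ℝ)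
    (hB : ∀ x y, B x y = Ψ x - Ψ y - ⟪gradient Ψ y, x - y⟫)
    -- approximate iterates (x̃_k) and exact MD iterates (x_k)
    (t : ℕ → ℝ) (ht : ∀ k, 0 < t k)
    (xt : ℕ → EuclideanSpace ℝ (Fin n)) (xs : ℕ → EuclideanSpace ℝ (Fin n))
    (hexact : ∀ k, gradient Ψ (xs (k + 1)) = gradient Ψ (xt k) - t k • gradient f (xt k))
    (K : ℕ) :
    ∑ k ∈ Finset.Icc 1 K, t k * (f (xt k) - f xstar)
      ≤ B xstar (xt 1)
        + ∑ k ∈ Finset.Icc 1 K,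
          ((1 / σ) * (t k) ^ 2 * (Nstar (gradient f (xt k))) ^ 2
            + (1 / (2 * t k * μ) + 1 / σ)
              * (Nstar (gradient Ψ (xt (k + 1)) - gradient Ψ (xs (k + 1)))) ^ 2) := by
  obtain rfl : B = bregman Ψ := funext₂ hB
  obtain rfl : Nstar = dualNorm N := funext hNstar
  let p : Seminorm ℝ (EuclideanSpace ℝ (Fin n)) := .of N hNadd hNsmul
  obtain ⟨m, hm, hpm⟩ := p.exists_pos_mul_norm_le fun x => (hN0 x).1
  have hstep k := mirror_step_regret_le (p := p) (c := xt (k + 1)) hσ hμ (ht k)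
    (mul_sq_le_bregman hstrong) (mul_sq_le_bregman hfstrong xstar (xt k))
    (inner_le_dualNorm_mul hm hpm) (dualNorm_nonneg hm hpm) (hexact k)
  have htelescope : ∑ k ∈ Finset.Icc 1 K, (bregman Ψ xstar (xt k) - bregman Ψ xstar (xt (k + 1)))
      = bregman Ψ xstar (xt 1) - bregman Ψ xstar (xt (K + 1)) := by
    rw [← Finset.Ico_add_one_right_eq_Icc, ← neg_sub,
      ← Finset.sum_Ico_sub (fun k => bregman Ψ xstar (xt k)) (by omega : 1 ≤ K + 1),
      ← Finset.sum_neg_distrib]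
    simp
  have hlast : 0 ≤ bregman Ψ xstar (xt (K + 1)) :=
    le_trans (by positivity) (mul_sq_le_bregman hstrong _ _)
  calc _ ≤ ∑ k ∈ Finset.Icc 1 K, (bregman Ψ xstar (xt k) - bregman Ψ xstar (xt (k + 1)) + _) :=
        Finset.sum_le_sum fun k _ => hstep k
    _ ≤ _ := by
      rw [Finset.sum_add_distrib, htelescope]
      exact add_le_add_left (sub_le_self _ hlast) _

theorem approximate_mirror_descent_regret_bound {n : ℕ}
    -- an arbitrary norm N on ℝⁿ and its dual norm Nstar
    (N : EuclideanSpace ℝ (Fin n) → ℝ)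
    (hN0 : ∀ x, N x = 0 ↔ x = 0)
    (hNsmul : ∀ (c : ℝ) x, N (c • x) = |c| * N x)
    (hNadd : ∀ x y, N (x + y) ≤ N x + N y)
    (Nstar : EuclideanSpace ℝ (Fin n) → ℝ)
    (hNstar : ∀ y, Nstar y = sSup {r | ∃ x, N x ≤ 1 ∧ r = ⟪y, x⟫})
    -- objective: μ-strongly convex with minimizer xstar
    (f : EuclideanSpace ℝ (Fin n) → ℝ) (hfdiff : Differentiable ℝ f)
    (μ : ℝ) (hμ : 0 < μ)
    (hfstrong : ∀ x y, f y ≥ f x + ⟪gradient f x, y - x⟫ + μ / 2 * (N (y - x)) ^ 2)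
    (xstar : EuclideanSpace ℝ (Fin n)) (hmin : ∀ x, f xstar ≤ f x)
    -- mirror potential, σ-strongly convex w.r.t. N
    (Ψ : EuclideanSpace ℝ (Fin n) → ℝ) (hΨ : ContDiff ℝ 1 Ψ) (σ : ℝ) (hσ : 0 < σ)
    (hstrong : ∀ x y, Ψ y ≥ Ψ x + ⟪gradient Ψ x, y - x⟫ + σ / 2 * (N (y - x)) ^ 2)
    (B : EuclideanSpace ℝ (Fin n) → EuclideanSpace ℝ (Fin n) → ℝ)
    (hB : ∀ x y, B x y = Ψ x - Ψ y - ⟪gradient Ψ y, x - y⟫)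
    -- approximate iterates (x̃_k) and exact MD iterates (x_k)
    (t : ℕ → ℝ) (ht : ∀ k, 0 < t k)
    (xt : ℕ → EuclideanSpace ℝ (Fin n)) (xs : ℕ → EuclideanSpace ℝ (Fin n))
    (hexact : ∀ k, gradient Ψ (xs (k + 1)) = gradient Ψ (xt k) - t k • gradient f (xt k))
    (K : ℕ) :
    ∑ k ∈ Finset.Icc 1 K, t k * (f (xt k) - f xstar)
      ≤ B xstar (xt 1)
        + ∑ k ∈ Finset.Icc 1 K,
          ((1 / σ) * (t k) ^ 2 * (Nstar (gradient f (xt k))) ^ 2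
            + (1 / (2 * t k * μ) + 1 / σ)
              * (Nstar (gradient Ψ (xt (k + 1)) - gradient Ψ (xs (k + 1)))) ^ 2) :=
  approximate_mirror_descent_regret_bound_general N hN0 hNsmul hNadd Nstar hNstar f μ hμ hfstrong
    xstar Ψ σ hσ hstrong B hB t ht xt xs hexact K
end

section
/- One-step amortized inequality for approximate MD: under the assumptions of the approximate MD regret bound (f μ-strongly convex, Ψ σ-strongly convex), for each k, t_k f(x̃_k) − t_k f(x*) + B_Ψ(x*, x̃_{k+1}) − B_Ψ(x*, x̃_k) ≤ (1/σ) t_k² ‖∇f(x̃_k)‖_*² + (1/(2t_kμ) + 1/σ) ‖∇Ψ(x̃_{k+1}) − ∇Ψ(x_{k+1})‖_*². -/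
open RealInnerProductSpace

lemma aux_young (a b c : ℝ) (hc : 0 < c) : a * b ≤ 1/c * a^2 + c/4 * b^2 := by
  have h : c * (a * b) ≤ a^2 + c * (c/4 * b^2) := by nlinarith [sq_nonneg (a - c/2*b)]
  have h2 : a * b ≤ (a^2 + c * (c/4 * b^2)) / c := by
    rw [le_div_iff₀ hc]; linarith
  have heq : (a^2 + c * (c/4 * b^2)) / c = 1/c * a^2 + c/4 * b^2 := by
    field_simp
  linarith [heq ▸ h2]

lemma aux_young2 (a b c : ℝ) (hc : 0 < c) : a * b ≤ 1/(2*c) * a^2 + c/2 * b^2 := by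
  have h : (2*c) * (a * b) ≤ a^2 + (2*c) * (c/2 * b^2) := by nlinarith [sq_nonneg (a - c*b)]
  have h2 : a * b ≤ (a^2 + (2*c) * (c/2 * b^2)) / (2*c) := by
    rw [le_div_iff₀ (by linarith)]; linarith
  have heq : (a^2 + (2*c) * (c/2 * b^2)) / (2*c) = 1/(2*c) * a^2 + c/2 * b^2 := by
    field_simp
  linarith [heq ▸ h2]

section aux

variable {n : ℕ} (N : EuclideanSpace ℝ (Fin n) → ℝ)
  (hN0 : ∀ x, N x = 0 ↔ x = 0)
  (hNsmul : ∀ (c : ℝ) x, N (c • x) = |c| * N x)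
  (hNadd : ∀ x y, N (x + y) ≤ N x + N y)

include hN0 hNsmul hNadd

lemma aux_nonneg : ∀ x, 0 ≤ N x := by
  intro x
  have h0 : N 0 = 0 := (hN0 0).mpr rfl
  have hneg : N (-x) = N x := by
    rw [← neg_one_smul ℝ x, hNsmul]; simp
  have := hNadd x (-x)
  simp only [add_neg_cancel, h0, hneg] at this
  linarith

lemma aux_lower : ∃ m : ℝ, 0 < m ∧ ∀ x, m * ‖x‖ ≤ N x := by
  classical
  have hnn := aux_nonneg N hN0 hNsmul hNadd
  have h0 : N 0 = 0 := (hN0 0).mpr rfl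
  -- subadditivity over sums
  have hsum : ∀ (s : Finset (Fin n)) (v : Fin n → EuclideanSpace ℝ (Fin n)),
      N (∑ i ∈ s, v i) ≤ ∑ i ∈ s, N (v i) := by
    intro s v
    induction s using Finset.cons_induction with
    | empty => simp [h0]
    | cons a s ha ih =>
      rw [Finset.sum_cons, Finset.sum_cons]
      exact le_trans (hNadd _ _) (by linarith)
  set b := EuclideanSpace.basisFun (Fin n) ℝ with hb
  set C : ℝ := ∑ i, N (b i) with hC
  have hCnn : 0 ≤ C := Finset.sum_nonneg fun i _ => hnn _
  have hub : ∀ x, N x ≤ C * ‖x‖ := by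
    intro x
    have hrepr : ∑ i, x i • (b i : EuclideanSpace ℝ (Fin n)) = x := by
      have := b.sum_repr x
      simpa [hb, EuclideanSpace.basisFun_repr] using this
    calc N x = N (∑ i, x i • (b i : EuclideanSpace ℝ (Fin n))) := by rw [hrepr]
      _ ≤ ∑ i, N (x i • (b i : EuclideanSpace ℝ (Fin n))) := hsum _ _
      _ = ∑ i, |x i| * N (b i) := by simp [hNsmul]
      _ ≤ ∑ i, ‖x‖ * N (b i) := by
          refine Finset.sum_le_sum fun i _ => ?_
          refine mul_le_mul_of_nonneg_right ?_ (hnn _)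
          calc |x i| = ‖x i‖ := (Real.norm_eq_abs _).symm
            _ ≤ ‖x‖ := by
                rw [EuclideanSpace.norm_eq]
                refine Real.le_sqrt_of_sq_le ?_
                exact Finset.single_le_sum (f := fun j => ‖x j‖^2)
                  (fun j _ => by positivity) (Finset.mem_univ i)
      _ = C * ‖x‖ := by rw [← Finset.mul_sum, mul_comm]
  rcases subsingleton_or_nontrivial (EuclideanSpace ℝ (Fin n)) with hs | hnt
  · exact ⟨1, one_pos, fun x => by rw [Subsingleton.elim x 0]; simp [h0]⟩
  have hneg : ∀ v, N (-v) = N v := by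
    intro v; rw [← neg_one_smul ℝ v, hNsmul]; simp
  have hcont : Continuous N := by
    have hlip : LipschitzWith C.toNNReal N := by
      apply LipschitzWith.of_dist_le_mul
      intro x y
      rw [Real.dist_eq, dist_eq_norm]
      have hx1 := hNadd (x - y) y
      rw [sub_add_cancel] at hx1
      have hx2 := hNadd (y - x) x
      rw [sub_add_cancel] at hx2
      have hyx : N (y - x) = N (x - y) := by rw [← hneg (x - y), neg_sub]
      rw [hyx] at hx2
      have hbound := hub (x - y)
      rw [abs_sub_le_iff]
      constructor
      · calc N x - N y ≤ N (x - y) := by linarith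
          _ ≤ C * ‖x - y‖ := hbound
          _ = C.toNNReal * ‖x - y‖ := by rw [Real.coe_toNNReal _ hCnn]
      · calc N y - N x ≤ N (x - y) := by linarith
          _ ≤ C * ‖x - y‖ := hbound
          _ = C.toNNReal * ‖x - y‖ := by rw [Real.coe_toNNReal _ hCnn]
    exact hlip.continuous
  obtain ⟨x₀, hx₀mem, hx₀min'⟩ :=
    (isCompact_sphere (0 : EuclideanSpace ℝ (Fin n)) 1).exists_isMinOn
      (NormedSpace.sphere_nonempty.mpr zero_le_one) hcont.continuousOn
  have hx₀min : ∀ z ∈ Metric.sphere (0 : EuclideanSpace ℝ (Fin n)) 1, N x₀ ≤ N z :=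
    fun z hz => hx₀min' hz
  have hx₀norm : ‖x₀‖ = 1 := by simpa using mem_sphere_zero_iff_norm.mp hx₀mem
  have hx₀ne : x₀ ≠ 0 := by
    intro h; rw [h] at hx₀norm; simp at hx₀norm
  have hm : 0 < N x₀ :=
    lt_of_le_of_ne (hnn _) (fun h => hx₀ne ((hN0 _).mp h.symm))
  refine ⟨N x₀, hm, fun x => ?_⟩
  rcases eq_or_ne x 0 with rfl | hx
  · simp [h0]
  · have hxn : 0 < ‖x‖ := norm_pos_iff.mpr hx
    have hu : ‖x‖⁻¹ • x ∈ Metric.sphere (0 : EuclideanSpace ℝ (Fin n)) 1 := by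
      rw [mem_sphere_zero_iff_norm, norm_smul, norm_inv, norm_norm,
        inv_mul_cancel₀ hxn.ne']
    have hle := hx₀min _ hu
    rw [hNsmul, abs_of_pos (inv_pos.mpr hxn)] at hle
    calc N x₀ * ‖x‖ ≤ (‖x‖⁻¹ * N x) * ‖x‖ := by nlinarith
      _ = N x := by field_simp

lemma aux_dual (Nstar : EuclideanSpace ℝ (Fin n) → ℝ)
    (hNstar : ∀ y, Nstar y = sSup {r | ∃ x, N x ≤ 1 ∧ r = ⟪y, x⟫}) :
    ∀ y x, ⟪y, x⟫ ≤ Nstar y * N x := by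
  obtain ⟨m, hm, hlow⟩ := aux_lower N hN0 hNsmul hNadd
  have hnn := aux_nonneg N hN0 hNsmul hNadd
  intro y x
  have hbdd : BddAbove {r | ∃ x, N x ≤ 1 ∧ r = ⟪y, x⟫} := by
    refine ⟨‖y‖ * (1/m), ?_⟩
    rintro r ⟨z, hz, rfl⟩
    have hz' : ‖z‖ ≤ 1/m := by
      rw [le_div_iff₀ hm]; linarith [hlow z]
    calc ⟪y, z⟫ ≤ ‖y‖ * ‖z‖ := real_inner_le_norm y z
      _ ≤ ‖y‖ * (1/m) := mul_le_mul_of_nonneg_left hz' (norm_nonneg y)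
  rcases eq_or_ne x 0 with rfl | hx
  · simp [(hN0 0).mpr rfl]
  · have hNx : 0 < N x :=
      lt_of_le_of_ne (hnn x) (fun h => hx ((hN0 x).mp h.symm))
    set u := (N x)⁻¹ • x with hu
    have hNu : N u ≤ 1 := by
      rw [hu, hNsmul, abs_of_pos (inv_pos.mpr hNx), inv_mul_cancel₀ hNx.ne']
    have hmem : ⟪y, u⟫ ∈ {r | ∃ x, N x ≤ 1 ∧ r = ⟪y, x⟫} := ⟨u, hNu, rfl⟩
    have hle : ⟪y, u⟫ ≤ Nstar y := by
      rw [hNstar]; exact le_csSup hbdd hmem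
    have hinner : ⟪y, u⟫ = (N x)⁻¹ * ⟪y, x⟫ := by
      rw [hu, real_inner_smul_right]
    rw [hinner] at hle
    have := mul_le_mul_of_nonneg_left hle hNx.le
    calc ⟪y, x⟫ = N x * ((N x)⁻¹ * ⟪y, x⟫) := by field_simp
      _ ≤ N x * Nstar y := this
      _ = Nstar y * N x := mul_comm _ _

end aux

theorem approximate_mirror_descent_one_step {n : ℕ}
    -- an arbitrary norm N on ℝⁿ and its dual norm Nstar
    (N : EuclideanSpace ℝ (Fin n) → ℝ)
    (hN0 : ∀ x, N x = 0 ↔ x = 0)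
    (hNsmul : ∀ (c : ℝ) x, N (c • x) = |c| * N x)
    (hNadd : ∀ x y, N (x + y) ≤ N x + N y)
    (Nstar : EuclideanSpace ℝ (Fin n) → ℝ)
    (hNstar : ∀ y, Nstar y = sSup {r | ∃ x, N x ≤ 1 ∧ r = ⟪y, x⟫})
    -- objective: μ-strongly convex with minimizer xstar
    (f : EuclideanSpace ℝ (Fin n) → ℝ) (hfdiff : Differentiable ℝ f)
    (μ : ℝ) (hμ : 0 < μ)
    (hfstrong : ∀ x y, f y ≥ f x + ⟪gradient f x, y - x⟫ + μ / 2 * (N (y - x)) ^ 2)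
    (xstar : EuclideanSpace ℝ (Fin n)) (hmin : ∀ x, f xstar ≤ f x)
    -- mirror potential, σ-strongly convex w.r.t. N
    (Ψ : EuclideanSpace ℝ (Fin n) → ℝ) (hΨ : ContDiff ℝ 1 Ψ) (σ : ℝ) (hσ : 0 < σ)
    (hstrong : ∀ x y, Ψ y ≥ Ψ x + ⟪gradient Ψ x, y - x⟫ + σ / 2 * (N (y - x)) ^ 2)
    (B : EuclideanSpace ℝ (Fin n) → EuclideanSpace ℝ (Fin n) → ℝ)
    (hB : ∀ x y, B x y = Ψ x - Ψ y - ⟪gradient Ψ y, x - y⟫)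
    -- approximate iterates (x̃_k) and exact MD iterates (x_k)
    (t : ℕ → ℝ) (ht : ∀ k, 0 < t k)
    (xt : ℕ → EuclideanSpace ℝ (Fin n)) (xs : ℕ → EuclideanSpace ℝ (Fin n))
    (hexact : ∀ k, gradient Ψ (xs (k + 1)) = gradient Ψ (xt k) - t k • gradient f (xt k))
    (k : ℕ) :
    t k * f (xt k) - t k * f xstar + B xstar (xt (k + 1)) - B xstar (xt k)
      ≤ (1 / σ) * (t k) ^ 2 * (Nstar (gradient f (xt k))) ^ 2
        + (1 / (2 * t k * μ) + 1 / σ)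
          * (Nstar (gradient Ψ (xt (k + 1)) - gradient Ψ (xs (k + 1)))) ^ 2 := by
  have dual := aux_dual N hN0 hNsmul hNadd Nstar hNstar
  have hnn := aux_nonneg N hN0 hNsmul hNadd
  have hneg : ∀ v : EuclideanSpace ℝ (Fin n), N (-v) = N v := by
    intro v; rw [← neg_one_smul ℝ v, hNsmul]; simp
  have hex := hexact k
  set a := xt k with ha
  set b := xt (k + 1) with hbb
  set sp := xs (k + 1) with hsp
  set tk := t k with htkk
  set g := gradient f a with hg
  have htk0 : 0 < tk := ht k
  set e := gradient Ψ b - gradient Ψ sp with he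
  have hGb : gradient Ψ b = (gradient Ψ a - tk • g) + e := by
    rw [he, ← hex]; abel
  rw [hB xstar b, hB xstar a]
  have hib : ⟪gradient Ψ b, xstar - b⟫
      = ⟪gradient Ψ a, xstar - b⟫ - tk * ⟪g, xstar - b⟫ + ⟪e, xstar - b⟫ := by
    rw [hGb, inner_add_left, inner_sub_left, real_inner_smul_left]
  have key : ∀ v : EuclideanSpace ℝ (Fin n),
      ⟪v, xstar - a⟫ = ⟪v, xstar - b⟫ + ⟪v, b - a⟫ := by
    intro v
    rw [← inner_add_right, show xstar - b + (b - a) = xstar - a from by abel]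
  have r1 : tk * ⟪g, xstar - a⟫ = tk * ⟪g, xstar - b⟫ + tk * ⟪g, b - a⟫ := by
    rw [key g]; ring
  have r2 := key (gradient Ψ a)
  have r3 : ⟪e, xstar - b⟫ + ⟪e, b - a⟫ + ⟪e, a - xstar⟫ = 0 := by
    rw [← inner_add_right, ← inner_add_right,
      show xstar - b + (b - a) + (a - xstar) = (0 : EuclideanSpace ℝ (Fin n)) from by abel,
      inner_zero_right]
  have h1 := hfstrong a xstar
  have h1' : tk * (f a + ⟪g, xstar - a⟫ + μ / 2 * (N (xstar - a)) ^ 2) ≤ tk * f xstar :=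
    mul_le_mul_of_nonneg_left h1.le htk0.le
  have h2 := hstrong a b
  have d1 : -⟪g, b - a⟫ ≤ Nstar g * N (b - a) := by
    have h := dual g (a - b)
    rw [show a - b = -(b - a) from by abel, inner_neg_right, hneg] at h
    exact h
  have d1' : tk * -⟪g, b - a⟫ ≤ tk * (Nstar g * N (b - a)) :=
    mul_le_mul_of_nonneg_left d1 htk0.le
  have d2 := dual e (b - a)
  have d3 : ⟪e, a - xstar⟫ ≤ Nstar e * N (xstar - a) := by
    have h := dual e (a - xstar)
    have hN' : N (a - xstar) = N (xstar - a) := by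
      rw [show a - xstar = -(xstar - a) from by abel, hneg]
    rw [hN'] at h
    exact h
  have Y1 := aux_young (tk * Nstar g) (N (b - a)) σ hσ
  have Y2 := aux_young (Nstar e) (N (b - a)) σ hσ
  have Y3 := aux_young2 (Nstar e) (N (xstar - a)) (tk * μ) (mul_pos htk0 hμ)
  have hden : 1 / (2 * (tk * μ)) = 1 / (2 * tk * μ) := by ring
  rw [hden] at Y3
  linarith [h1', h2, hib, r1, r2, r3, d1', d2, d3, Y1, Y2, Y3]
end

section
/- If Ψ is σ-strongly convex and f is μ-strongly convex (with respect to the same norm), then for the approximate and exact MD iterates as above, B_Ψ(x*, x̃_{k+1}) − B_Ψ(x*, x̃_k) ≤ −(σ/2)‖x̃_{k+1} − x̃_k‖² + ⟨t_k ∇f(x̃_k), x* − x̃_{k+1}⟩ − ⟨∇Ψ(x̃_{k+1}) − ∇Ψ(x_{k+1}), x* − x̃_{k+1}⟩. -/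
open RealInnerProductSpace

theorem approximate_mirror_descent_bregman_decrease {n : ℕ}
    -- an arbitrary norm N on ℝⁿ and its dual norm Nstar
    (N : EuclideanSpace ℝ (Fin n) → ℝ)
    (hN0 : ∀ x, N x = 0 ↔ x = 0)
    (hNsmul : ∀ (c : ℝ) x, N (c • x) = |c| * N x)
    (hNadd : ∀ x y, N (x + y) ≤ N x + N y)
    (Nstar : EuclideanSpace ℝ (Fin n) → ℝ)
    (hNstar : ∀ y, Nstar y = sSup {r | ∃ x, N x ≤ 1 ∧ r = ⟪y, x⟫})
    -- objective: μ-strongly convex with minimizer xstar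
    (f : EuclideanSpace ℝ (Fin n) → ℝ) (hfdiff : Differentiable ℝ f)
    (μ : ℝ) (hμ : 0 < μ)
    (hfstrong : ∀ x y, f y ≥ f x + ⟪gradient f x, y - x⟫ + μ / 2 * (N (y - x)) ^ 2)
    (xstar : EuclideanSpace ℝ (Fin n))
    -- mirror potential, σ-strongly convex w.r.t. N
    (Ψ : EuclideanSpace ℝ (Fin n) → ℝ) (hΨ : ContDiff ℝ 1 Ψ) (σ : ℝ) (hσ : 0 < σ)
    (hstrong : ∀ x y, Ψ y ≥ Ψ x + ⟪gradient Ψ x, y - x⟫ + σ / 2 * (N (y - x)) ^ 2)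
    (B : EuclideanSpace ℝ (Fin n) → EuclideanSpace ℝ (Fin n) → ℝ)
    (hB : ∀ x y, B x y = Ψ x - Ψ y - ⟪gradient Ψ y, x - y⟫)
    -- approximate iterates (x̃_k) and exact MD iterates (x_k)
    (t : ℕ → ℝ) (ht : ∀ k, 0 < t k)
    (xt : ℕ → EuclideanSpace ℝ (Fin n)) (xs : ℕ → EuclideanSpace ℝ (Fin n))
    (hexact : ∀ k, gradient Ψ (xs (k + 1)) = gradient Ψ (xt k) - t k • gradient f (xt k))
    (k : ℕ) :
    B xstar (xt (k + 1)) - B xstar (xt k)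
      ≤ -(σ / 2) * (N (xt (k + 1) - xt k)) ^ 2
        + ⟪t k • gradient f (xt k), xstar - xt (k + 1)⟫
        - ⟪gradient Ψ (xt (k + 1)) - gradient Ψ (xs (k + 1)), xstar - xt (k + 1)⟫ := by
  have h := hstrong (xt k) (xt (k + 1))
  rw [hB, hB, hexact]
  simp only [inner_sub_left, inner_sub_right, inner_smul_left, RCLike.star_def, conj_trivial] at *
  linarith
end

section
/- If f and Ψ are twice differentiable convex functions on a convex set with nonempty interior, then f is L-smooth relative to Ψ and μ-strongly convex relative to Ψ if and only if μ∇²Ψ(x) ⪯ ∇²f(x) ⪯ L∇²Ψ(x) for all x in the interior. -/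
/-!
Relative smoothness and relative strong convexity compare Bregman divergences:
`B_f ≤ L • B_Ψ` and `μ • B_Ψ ≤ B_f`. As `B_g` is linear in `g`, each comparison is the
first-order convexity condition `0 ≤ B_g` for `g = L • Ψ - f`, resp. `g = f - μ • Ψ`, and for a
`C²` function on an open convex set that condition is equivalent to a positive semidefinite
Hessian. Both directions are checked on lines `t ↦ x + t • v`: nonnegative divergences make the
directional derivative monotone, so its derivative (the Hessian form) is nonnegative; conversely a
nonnegative second derivative makes `g` convex on a segment, which lies above its tangent line.
-/

open RealInnerProductSpace Set Filter

variable {E : Type*} [NormedAddCommGroup E] [NormedSpace ℝ E]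

noncomputable def bregmanDiv (g : E → ℝ) (y x : E) : ℝ :=
  g y - g x - fderiv ℝ g x (y - x)

section Bregman

variable {g h : E → ℝ} {x y : E}

theorem bregmanDiv_add_bregmanDiv_swap :
    bregmanDiv g y x + bregmanDiv g x y = (fderiv ℝ g y - fderiv ℝ g x) (y - x) := by
  have hswap : x - y = -(y - x) := (neg_sub y x).symm
  simp only [bregmanDiv, hswap, map_neg, sub_apply]
  ring

theorem bregmanDiv_sub (hg : DifferentiableAt ℝ g x) (hh : DifferentiableAt ℝ h x) :
    bregmanDiv (g - h) y x = bregmanDiv g y x - bregmanDiv h y x := by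
  simp only [bregmanDiv, fderiv_sub hg hh, Pi.sub_apply, sub_apply]
  ring

theorem bregmanDiv_const_smul (hg : DifferentiableAt ℝ g x) (c : ℝ) :
    bregmanDiv (c • g) y x = c * bregmanDiv g y x := by
  simp only [bregmanDiv, fderiv_const_smul hg, Pi.smul_apply, smul_apply,
    smul_eq_mul]
  ring

end Bregman

section Line

variable {x v : E} {t : ℝ}

theorem hasDerivAt_comp_add_smul {F : Type*} [NormedAddCommGroup F] [NormedSpace ℝ F]
    {g : E → F} (hg : DifferentiableAt ℝ g (x + t • v)) :
    HasDerivAt (fun t : ℝ => g (x + t • v)) (fderiv ℝ g (x + t • v) v) t := by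
  have hline : HasDerivAt (fun t : ℝ => x + t • v) v t := by
    simpa using ((hasDerivAt_id t).smul_const v).const_add x
  exact hg.hasFDerivAt.comp_hasDerivAt t hline

theorem hasDerivAt_fderiv_comp_add_smul_apply {g : E → ℝ} (hg : ContDiffAt ℝ 2 g (x + t • v)) :
    HasDerivAt (fun t : ℝ => fderiv ℝ g (x + t • v) v)
      (iteratedFDeriv ℝ 2 g (x + t • v) ![v, v]) t := by
  have hDg : DifferentiableAt ℝ (fderiv ℝ g) (x + t • v) :=
    (hg.fderiv_right (m := 1) (by norm_num)).differentiableAt one_ne_zero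
  rw [iteratedFDeriv_two_apply]
  simpa using (hasDerivAt_comp_add_smul hDg).clm_apply (hasDerivAt_const t v)

end Line

section Hessian

variable {g h : E → ℝ} {U : Set E}

theorem iteratedFDeriv_two_nonneg_of_bregmanDiv_nonneg (hU : IsOpen U)
    (hg : ContDiffOn ℝ 2 g U) (hB : ∀ x ∈ U, ∀ y ∈ U, 0 ≤ bregmanDiv g y x)
    {x : E} (hx : x ∈ U) (v : E) : 0 ≤ iteratedFDeriv ℝ 2 g x ![v, v] := by
  set S := (fun t : ℝ => x + t • v) ⁻¹' U
  have hS : IsOpen S := hU.preimage (by fun_prop)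
  have h0S : (0 : ℝ) ∈ S := by simpa [S] using hx
  have hmono : MonotoneOn (fun t : ℝ => fderiv ℝ g (x + t • v) v) S := by
    intro s hs t ht hst
    have hsum := add_nonneg (hB _ hs _ ht) (hB _ ht _ hs)
    have hdiff : x + t • v - (x + s • v) = (t - s) • v := by
      rw [sub_smul]; abel
    rw [bregmanDiv_add_bregmanDiv_swap, hdiff, map_smul, smul_eq_mul, sub_apply] at hsum
    dsimp only
    rcases hst.eq_or_lt with rfl | hlt
    · exact le_rfl
    · exact sub_nonneg.1 (nonneg_of_mul_nonneg_right hsum (sub_pos.2 hlt))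
  have hacc : AccPt (0 : ℝ) (𝓟 S) := by
    simpa using PerfectSpace.univ_preperfect.open_inter hS 0 ⟨h0S, mem_univ 0⟩
  have hderiv := hasDerivAt_fderiv_comp_add_smul_apply (t := 0) (v := v)
    (hg.contDiffAt (hU.mem_nhds (by simpa using hx)))
  simpa using hderiv.hasDerivWithinAt.nonneg_of_monotoneOn hacc hmono

theorem bregmanDiv_nonneg_of_iteratedFDeriv_two_nonneg (hU : IsOpen U) (hUc : Convex ℝ U)
    (hg : ContDiffOn ℝ 2 g U) (hH : ∀ x ∈ U, ∀ v, 0 ≤ iteratedFDeriv ℝ 2 g x ![v, v])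
    {x y : E} (hx : x ∈ U) (hy : y ∈ U) : 0 ≤ bregmanDiv g y x := by
  have hseg : ∀ t ∈ Icc (0 : ℝ) 1, x + t • (y - x) ∈ U := fun t ht =>
    hUc.add_smul_sub_mem hx hy ht
  have hC2 : ∀ t ∈ Icc (0 : ℝ) 1, ContDiffAt ℝ 2 g (x + t • (y - x)) := fun t ht =>
    hg.contDiffAt (hU.mem_nhds (hseg t ht))
  have hφ' : ∀ t ∈ Icc (0 : ℝ) 1, HasDerivAt (fun t : ℝ => g (x + t • (y - x)))
      (fderiv ℝ g (x + t • (y - x)) (y - x)) t := fun t ht =>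
    hasDerivAt_comp_add_smul ((hC2 t ht).differentiableAt two_ne_zero)
  have hconvex : ConvexOn ℝ (Icc 0 1) fun t : ℝ => g (x + t • (y - x)) :=
    convexOn_of_hasDerivWithinAt2_nonneg (convex_Icc 0 1)
      (fun t ht => (hφ' t ht).continuousAt.continuousWithinAt)
      (fun t ht => (hφ' t (interior_subset ht)).hasDerivWithinAt)
      (fun t ht => (hasDerivAt_fderiv_comp_add_smul_apply
        (hC2 t (interior_subset ht))).hasDerivWithinAt)
      (fun t ht => hH _ (hseg t (interior_subset ht)) _)
  have hslope := hconvex.le_slope_of_hasDerivAt (left_mem_Icc.2 zero_le_one)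
    (right_mem_Icc.2 zero_le_one) zero_lt_one (hφ' 0 (left_mem_Icc.2 zero_le_one))
  simpa [slope, bregmanDiv] using hslope

theorem bregmanDiv_nonneg_iff_iteratedFDeriv_two_nonneg (hU : IsOpen U) (hUc : Convex ℝ U)
    (hg : ContDiffOn ℝ 2 g U) :
    (∀ x ∈ U, ∀ y ∈ U, 0 ≤ bregmanDiv g y x) ↔
      ∀ x ∈ U, ∀ v, 0 ≤ iteratedFDeriv ℝ 2 g x ![v, v] :=
  ⟨fun hB _ hx v => iteratedFDeriv_two_nonneg_of_bregmanDiv_nonneg hU hg hB hx v,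
    fun hH _ hx _ hy => bregmanDiv_nonneg_of_iteratedFDeriv_two_nonneg hU hUc hg hH hx hy⟩

theorem bregmanDiv_le_iff_iteratedFDeriv_two_le (hU : IsOpen U) (hUc : Convex ℝ U)
    (hg : ContDiffOn ℝ 2 g U) (hh : ContDiffOn ℝ 2 h U) :
    (∀ x ∈ U, ∀ y ∈ U, bregmanDiv g y x ≤ bregmanDiv h y x) ↔
      ∀ x ∈ U, ∀ v, iteratedFDeriv ℝ 2 g x ![v, v] ≤ iteratedFDeriv ℝ 2 h x ![v, v] := by
  have hC2 : ∀ {k : E → ℝ}, ContDiffOn ℝ 2 k U → ∀ x ∈ U, ContDiffAt ℝ 2 k x :=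
    fun hk x hx => hk.contDiffAt (hU.mem_nhds hx)
  refine Iff.trans ?_ <| (bregmanDiv_nonneg_iff_iteratedFDeriv_two_nonneg (g := h - g) hU hUc
    (hh.sub hg)).trans ?_
  · refine forall₂_congr fun x hx => forall₂_congr fun y _ => ?_
    rw [bregmanDiv_sub ((hC2 hh x hx).differentiableAt two_ne_zero)
      ((hC2 hg x hx).differentiableAt two_ne_zero), sub_nonneg]
  · refine forall₂_congr fun x hx => forall_congr' fun v => ?_
    rw [iteratedFDeriv_sub_apply (hC2 hh x hx) (hC2 hg x hx), sub_apply, sub_nonneg]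

end Hessian

theorem relative_smoothness_hessian_characterization_general {n : ℕ}
    (s : Set (EuclideanSpace ℝ (Fin n))) (hs : Convex ℝ s)
    (f Ψ : EuclideanSpace ℝ (Fin n) → ℝ)
    (hf : ContDiff ℝ 2 f) (hΨ : ContDiff ℝ 2 Ψ)
    (L μ : ℝ) :
    ((∀ x ∈ interior s, ∀ y ∈ interior s,
        f y ≤ f x + ⟪gradient f x, y - x⟫
          + L * (Ψ y - Ψ x - ⟪gradient Ψ x, y - x⟫)) ∧
     (∀ x ∈ interior s, ∀ y ∈ interior s,
        f y ≥ f x + ⟪gradient f x, y - x⟫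
          + μ * (Ψ y - Ψ x - ⟪gradient Ψ x, y - x⟫)))
    ↔ (∀ x ∈ interior s, ∀ v : EuclideanSpace ℝ (Fin n),
        μ * iteratedFDeriv ℝ 2 Ψ x ![v, v] ≤ iteratedFDeriv ℝ 2 f x ![v, v]
          ∧ iteratedFDeriv ℝ 2 f x ![v, v] ≤ L * iteratedFDeriv ℝ 2 Ψ x ![v, v]) := by
  have hΨ' : ∀ c : ℝ, ContDiff ℝ 2 (c • Ψ) := fun c => hΨ.const_smul c
  have hessian_smul : ∀ (c : ℝ) x v, iteratedFDeriv ℝ 2 (c • Ψ) x ![v, v] =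
      c * iteratedFDeriv ℝ 2 Ψ x ![v, v] := fun c x v => by
    rw [iteratedFDeriv_const_smul_apply hΨ.contDiffAt, smul_apply, smul_eq_mul]
  have bregman_smul : ∀ (c : ℝ) x y, bregmanDiv (c • Ψ) y x = c * bregmanDiv Ψ y x :=
    fun c x y => bregmanDiv_const_smul (hΨ.differentiable two_ne_zero x) c
  have smooth := bregmanDiv_le_iff_iteratedFDeriv_two_le isOpen_interior hs.interior
    hf.contDiffOn (hΨ' L).contDiffOn
  have strong := bregmanDiv_le_iff_iteratedFDeriv_two_le isOpen_interior hs.interior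
    (hΨ' μ).contDiffOn hf.contDiffOn
  have rearrange_le : ∀ a b c d : ℝ, a - b - c ≤ d ↔ a ≤ b + c + d := fun _ _ _ _ => by
    constructor <;> intro <;> linarith
  have rearrange_ge : ∀ a b c d : ℝ, d ≤ a - b - c ↔ a ≥ b + c + d := fun _ _ _ _ => by
    constructor <;> intro <;> linarith
  simp only [bregman_smul] at smooth strong
  simp only [hessian_smul, bregmanDiv, ← inner_gradient_left, rearrange_le, rearrange_ge]
    at smooth strong
  rw [smooth, strong, and_comm, ← forall₂_and]
  refine forall₂_congr fun x _ => ?_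
  exact forall_and.symm

theorem relative_smoothness_hessian_characterization {n : ℕ}
    (s : Set (EuclideanSpace ℝ (Fin n))) (hs : Convex ℝ s) (hsint : (interior s).Nonempty)
    (f Ψ : EuclideanSpace ℝ (Fin n) → ℝ)
    (hf : ContDiff ℝ 2 f) (hΨ : ContDiff ℝ 2 Ψ)
    (hfconv : ConvexOn ℝ s f) (hΨconv : ConvexOn ℝ s Ψ)
    (L μ : ℝ) :
    ((∀ x ∈ interior s, ∀ y ∈ interior s,
        f y ≤ f x + ⟪gradient f x, y - x⟫
          + L * (Ψ y - Ψ x - ⟪gradient Ψ x, y - x⟫)) ∧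
     (∀ x ∈ interior s, ∀ y ∈ interior s,
        f y ≥ f x + ⟪gradient f x, y - x⟫
          + μ * (Ψ y - Ψ x - ⟪gradient Ψ x, y - x⟫)))
    ↔ (∀ x ∈ interior s, ∀ v : EuclideanSpace ℝ (Fin n),
        μ * iteratedFDeriv ℝ 2 Ψ x ![v, v] ≤ iteratedFDeriv ℝ 2 f x ![v, v]
          ∧ iteratedFDeriv ℝ 2 f x ![v, v] ≤ L * iteratedFDeriv ℝ 2 Ψ x ![v, v]) :=
  relative_smoothness_hessian_characterization_general s hs f Ψ hf hΨ L μ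
end

section
/- Relative-smoothness descent inequality with approximation: Let f be L-smooth and μ-strongly convex relative to Ψ (L > 0, μ ≥ 0). For any point x̃ in the interior of 𝒳, let x₊ = argmin_x {⟨x, ∇f(x̃)⟩ + L·B_Ψ(x, x̃)}. Then for any x in 𝒳, f(x₊) ≤ f(x) + (L−μ)·B_Ψ(x, x̃) − L·B_Ψ(x, x₊). -/
open RealInnerProductSpace

theorem relative_smoothness_descent_step {n : ℕ}
    (𝒳 : Set (EuclideanSpace ℝ (Fin n))) (h𝒳 : Convex ℝ 𝒳)
    (h𝒳int : (interior 𝒳).Nonempty)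
    (Ψ : EuclideanSpace ℝ (Fin n) → ℝ) (hΨdiff : Differentiable ℝ Ψ)
    (hΨconv : ConvexOn ℝ 𝒳 Ψ)
    (B : EuclideanSpace ℝ (Fin n) → EuclideanSpace ℝ (Fin n) → ℝ)
    (hB : ∀ x y, B x y = Ψ x - Ψ y - ⟪gradient Ψ y, x - y⟫)
    (f : EuclideanSpace ℝ (Fin n) → ℝ) (hfdiff : Differentiable ℝ f)
    (L μ : ℝ) (hL : 0 < L) (hμ : 0 ≤ μ)
    (hsmooth : ∀ x ∈ interior 𝒳, ∀ y ∈ interior 𝒳,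
      f y ≤ f x + ⟪gradient f x, y - x⟫ + L * B y x)
    (hrelstrong : ∀ x ∈ interior 𝒳, ∀ y ∈ interior 𝒳,
      f y ≥ f x + ⟪gradient f x, y - x⟫ + μ * B y x)
    (xt xplus : EuclideanSpace ℝ (Fin n)) (hxt : xt ∈ interior 𝒳)
    (hxplus : xplus ∈ interior 𝒳)
    (hmin : IsMinOn (fun x => ⟪x, gradient f xt⟫ + L * B x xt) 𝒳 xplus) :
    ∀ x ∈ 𝒳, f xplus ≤ f x + (L - μ) * B x xt - L * B x xplus := by
  intro x hx
  set g := gradient f xt with hg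
  set q := gradient Ψ xt with hq
  set p := gradient Ψ xplus with hp
  -- derivative of the objective at xplus
  have hΨp : HasFDerivAt Ψ (InnerProductSpace.toDual ℝ _ p) xplus :=
    (hΨdiff xplus).hasGradientAt.hasFDerivAt
  have hφ : HasFDerivAt (fun x => ⟪x, g⟫ + L * B x xt)
      (innerSL ℝ g + L • ((InnerProductSpace.toDual ℝ _ p) - innerSL ℝ q)) xplus := by
    have h1 : HasFDerivAt (fun x : EuclideanSpace ℝ (Fin n) => ⟪x, g⟫) (innerSL ℝ g) xplus := by
      have : (fun x : EuclideanSpace ℝ (Fin n) => ⟪x, g⟫) = fun x => ⟪g, x⟫ := by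
        funext x; exact real_inner_comm _ _
      rw [this]
      exact (innerSL ℝ g).hasFDerivAt
    have h2 : HasFDerivAt (fun x => B x xt)
        ((InnerProductSpace.toDual ℝ _ p) - innerSL ℝ q) xplus := by
      have : (fun x => B x xt) = fun x => Ψ x - Ψ xt - ⟪q, x - xt⟫ := by
        funext x; rw [hB]
      rw [this]
      have h3 : HasFDerivAt (fun x : EuclideanSpace ℝ (Fin n) => ⟪q, x - xt⟫)
          (innerSL ℝ q) xplus := by
        have he : (fun x : EuclideanSpace ℝ (Fin n) => ⟪q, x - xt⟫)
            = fun x => ⟪q, x⟫ - ⟪q, xt⟫ := by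
          funext x; rw [inner_sub_right]
        rw [he]
        exact (innerSL ℝ q).hasFDerivAt.sub_const ⟪q, xt⟫
      exact (hΨp.sub_const (Ψ xt)).sub h3
    exact h1.add (h2.const_smul L)
  have hloc : IsLocalMin (fun x => ⟪x, g⟫ + L * B x xt) xplus :=
    hmin.isLocalMin (mem_nhds_iff.mpr ⟨interior 𝒳, interior_subset, isOpen_interior, hxplus⟩)
  have hzero := hloc.hasFDerivAt_eq_zero hφ
  have hkey : ⟪g, x - xplus⟫ + L * (⟪p, x - xplus⟫ - ⟪q, x - xplus⟫) = 0 := by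
    have := congrFun (congrArg (fun (T : EuclideanSpace ℝ (Fin n) →L[ℝ] ℝ) => T.toFun) hzero) (x - xplus)
    simpa [InnerProductSpace.toDual_apply_apply] using this
  -- strong convexity extended to 𝒳 by continuity
  have hstrongx : f xt + ⟪g, x - xt⟫ + μ * B x xt ≤ f x := by
    set S : Set (EuclideanSpace ℝ (Fin n)) :=
      {y | f xt + ⟪g, y - xt⟫ + μ * (Ψ y - Ψ xt - ⟪q, y - xt⟫) ≤ f y} with hS
    have hclosed : IsClosed S := by
      apply isClosed_le
      · exact (continuous_const.add ((continuous_const.inner (continuous_id.sub continuous_const)))).add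
          (continuous_const.mul ((hΨdiff.continuous.sub continuous_const).sub
            (continuous_const.inner (continuous_id.sub continuous_const))))
      · exact hfdiff.continuous
    have hsub : interior 𝒳 ⊆ S := by
      intro y hy
      have := hrelstrong xt hxt y hy
      rw [hB] at this
      exact this
    have hxcl : x ∈ closure (interior 𝒳) := by
      obtain ⟨z, hz⟩ := h𝒳int
      have htend : Filter.Tendsto (fun k : ℕ => x + (1 / (k + 1) : ℝ) • (z - x))
          Filter.atTop (nhds x) := by
        have h0 : Filter.Tendsto (fun k : ℕ => (1 / (k + 1) : ℝ)) Filter.atTop (nhds 0) :=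
          tendsto_one_div_add_atTop_nhds_zero_nat
        have := ((h0.smul_const (z - x)).const_add x)
        simpa using this
      refine mem_closure_of_tendsto htend (Filter.Eventually.of_forall fun k => ?_)
      exact h𝒳.add_smul_sub_mem_interior hx hz
        ⟨by positivity, by rw [div_le_one (by positivity)]; linarith [Nat.cast_nonneg (α := ℝ) k]⟩
    have : x ∈ S := hclosed.closure_subset (closure_mono hsub hxcl)
    rw [hS] at this
    rw [hB]
    exact this
  -- smoothness at xplus
  have hsm := hsmooth xt hxt xplus hxplus
  rw [hB] at hsm hstrongx
  rw [hB x xt, hB x xplus]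
  have e1 : ⟪q, x - xt⟫ = ⟪q, x - xplus⟫ + ⟪q, xplus - xt⟫ := by
    rw [← inner_add_right]; congr 1; abel
  have e2 : ⟪g, x - xt⟫ = ⟪g, x - xplus⟫ + ⟪g, xplus - xt⟫ := by
    rw [← inner_add_right]; congr 1; abel
  have hACD : (Ψ x - Ψ xt - ⟪q, x - xt⟫) - (Ψ x - Ψ xplus - ⟪p, x - xplus⟫)
      - (Ψ xplus - Ψ xt - ⟪q, xplus - xt⟫) = ⟪p, x - xplus⟫ - ⟪q, x - xplus⟫ := by
    rw [e1]; ring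
  have hE : L * (Ψ x - Ψ xt - ⟪q, x - xt⟫) - L * (Ψ x - Ψ xplus - ⟪p, x - xplus⟫)
      - L * (Ψ xplus - Ψ xt - ⟪q, xplus - xt⟫)
      = L * (⟪p, x - xplus⟫ - ⟪q, x - xplus⟫) := by linear_combination L * hACD
  have hG : (L - μ) * (Ψ x - Ψ xt - ⟪q, x - xt⟫)
      = L * (Ψ x - Ψ xt - ⟪q, x - xt⟫) - μ * (Ψ x - Ψ xt - ⟪q, x - xt⟫) := by ring
  linarith [hstrongx, hsm, hkey, e2, hE, hG]
end
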